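/- With the appendix construction applied to a 3CNF formula Ψ over ℙ={p_1,…,p_n} and ℚ={q_1,…,q_n}: let p be any 0-1 assignment of ℙ and let 𝕐' := {y^P_j : p_j = 0} ∪ {y^N_j : p_j = 1} (so |𝕐'| = n and for each j exactly one of y^P_j, y^N_j lies in 𝕐'). If (y,z) is a 0-1 assignment of 𝕐 ∪ ℤ that sets all variables of 𝕐' to 0 and satisfies ϝ, then s_j = 0 for every j ∈ [n] and s = 0; consequently every clause C'_i of Ψ' (i ∈ [m]) is satisfied by (y,z). -/
import Mathlib


namespace Appendix

/-- Variables of the `∀∃3CNF-SAT` instance: `Sum.inl j` is `p_j ∈ ℙ`,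
`Sum.inr j` is `q_j ∈ ℚ`. -/
abbrev PQ (n : ℕ) := Fin n ⊕ Fin n

/-- Variables of the constructed `∀(Γ)∃CNF-SAT` instance:
`𝕐 = {yP j, yN j}` and `ℤ = {z j} ∪ {sj j} ∪ {s}`. -/
inductive NewVar (n : ℕ) where
  | yP : Fin n → NewVar n
  | yN : Fin n → NewVar n
  | z : Fin n → NewVar n
  | sj : Fin n → NewVar n
  | s : NewVar n
deriving DecidableEq

/-- A CNF formula, given as a list of clauses, each clause being a list of
literals (a variable with a polarity; `true` = positive literal).  An
assignment satisfies it if every clause contains a true literal. -/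
def Satisfies {V : Type*} (F : List (List (V × Bool))) (a : V → Bool) : Prop :=
  ∀ C ∈ F, ∃ l ∈ C, a l.1 = l.2

/-- Translation of literals: `p_j ↦ yP j`, `¬p_j ↦ yN j` (both becoming
positive literals), `q_j ↦ z j`, `¬q_j ↦ ¬ z j`. -/
def trLit {n : ℕ} : PQ n × Bool → NewVar n × Bool
  | (Sum.inl j, true) => (.yP j, true)
  | (Sum.inl j, false) => (.yN j, true)
  | (Sum.inr j, b) => (.z j, b)

/-- The formula `Ψ'` obtained from `Ψ` by translating every literal. -/
def Psi' {n : ℕ} (Ψ : List (List (PQ n × Bool))) : List (List (NewVar n × Bool)) :=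
  Ψ.map fun C => C.map trLit

/-- The constructed formula `ϝ`: the clauses `(C'_i ∨ s)` for `i ∈ [m]`,
the clauses `(yP j ∨ ¬ sj j)` and `(yN j ∨ ¬ sj j)` for `j ∈ [n]`, and the
clause `(¬ s ∨ sj 1 ∨ ⋯ ∨ sj n)`. -/
def digammaF {n : ℕ} (Ψ : List (List (PQ n × Bool))) : List (List (NewVar n × Bool)) :=
  (Ψ.map fun C => C.map trLit ++ [(NewVar.s, true)]) ++
  ((List.finRange n).map fun j => [(NewVar.yP j, true), (NewVar.sj j, false)]) ++
  ((List.finRange n).map fun j => [(NewVar.yN j, true), (NewVar.sj j, false)]) ++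
  [(NewVar.s, false) :: (List.finRange n).map fun j => (NewVar.sj j, true)]

/-- The variable set `𝕐 = {yP j : j ∈ [n]} ∪ {yN j : j ∈ [n]}`. -/
def Yset (n : ℕ) : Finset (NewVar n) :=
  Finset.univ.image NewVar.yP ∪ Finset.univ.image NewVar.yN

/-- Appendix construction: let `p` be any 0-1 assignment of
`ℙ` and let `𝕐' = {yP j : p j = 0} ∪ {yN j : p j = 1}`.  If `a` is a 0-1
assignment of `𝕐 ∪ ℤ` that sets all variables of `𝕐'` to 0 and satisfies `ϝ`,
then `a (sj j) = 0` for every `j`, `a s = 0`, and consequently every clause of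
`Ψ'` is satisfied by `a`. -/
theorem stmt2 (n : ℕ) (Ψ : List (List (PQ n × Bool)))
    (h3 : ∀ C ∈ Ψ, C.length = 3)
    (p : Fin n → Bool) (a : NewVar n → Bool)
    (hY' : ∀ j, (p j = false → a (NewVar.yP j) = false) ∧
                (p j = true → a (NewVar.yN j) = false))
    (hsat : Satisfies (digammaF Ψ) a) :
    (∀ j, a (NewVar.sj j) = false) ∧ a NewVar.s = false ∧ Satisfies (Psi' Ψ) a := by
  have hsj : ∀ j, a (NewVar.sj j) = false := by
    intro j
    by_contra h
    have hj : a (NewVar.sj j) = true := by simpa using h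
    have hP : a (NewVar.yP j) = true := by
      have := hsat [(NewVar.yP j, true), (NewVar.sj j, false)] (by
        simp [digammaF])
      simp [hj] at this; exact this
    have hN : a (NewVar.yN j) = true := by
      have := hsat [(NewVar.yN j, true), (NewVar.sj j, false)] (by
        simp [digammaF])
      simp [hj] at this; exact this
    cases hp : p j with
    | false => have := (hY' j).1 hp; rw [hP] at this; exact Bool.noConfusion this
    | true => have := (hY' j).2 hp; rw [hN] at this; exact Bool.noConfusion this
  have hs : a NewVar.s = false := by
    have := hsat ((NewVar.s, false) :: (List.finRange n).map fun j => (NewVar.sj j, true))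
      (by simp [digammaF])
    obtain ⟨l, hl, hal⟩ := this
    rcases List.mem_cons.1 hl with rfl | hl
    · exact hal
    · obtain ⟨j, _, rfl⟩ := List.mem_map.1 hl
      rw [hsj j] at hal; exact absurd hal (by simp)
  refine ⟨hsj, hs, ?_⟩
  intro C hC
  obtain ⟨C0, hC0, rfl⟩ := List.mem_map.1 hC
  have := hsat (C0.map trLit ++ [(NewVar.s, true)]) (by
    simp [digammaF]; left; exact ⟨C0, hC0, rfl⟩)
  obtain ⟨l, hl, hal⟩ := this
  rcases List.mem_append.1 hl with hl | hl
  · exact ⟨l, hl, hal⟩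
  · simp at hl; subst hl; rw [hs] at hal; exact absurd hal (by simp)


end Appendix
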